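/- arXiv:2410.21250 — 2 statements merged into one kernel-verified Lean document; each statement's English description precedes it below -/
import Mathlib

section
/- Let S ⊆ ℕ² be nonempty and let N := convexHull ℝ (S + σ∨) ⊆ ℝ² be its Newton polygon. Then for every m = (m₁,m₂) ∈ ℝ²: m ∈ N if and only if m₁ ≥ 0, m₂ ≥ 0, and for all real numbers w₁ ≥ 0 and w₂ ≥ 0 one has sInf { w₁·p + w₂·q : (p,q) ∈ S } ≤ w₁·m₁ + w₂·m₂. (The paper's Proposition 7.14: a Newton polygon is reconstructed from its tropical/support function.) -/
/-!
The Newton polygon `N` is `conv S + σ∨`, and since every point of `S` dominates a minimal one,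
it is already `conv M + σ∨` for the set `M` of minimal elements of `S`, which is finite by
Dickson's lemma; so `N` is closed. Both `σ∨` and every half-plane
`{x | trop_S(w) ≤ w₁ x₁ + w₂ x₂}` with `w ≥ 0` are convex and contain `S + σ∨`, which gives
the forward direction. Conversely, a point `m ∉ N` is strictly separated from the closed convex
set `N` by a linear functional `w`; as `w` is bounded below on `N` and `N + σ∨ ⊆ N`, `w ≥ 0`,
and the separation `w(m) < trop_S(w)` contradicts the hypothesis on `m`.
-/

open scoped Pointwise

/-- The nonnegative quadrant `σ∨ = [0,∞)² ⊆ ℝ²`. -/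
def quadrant : Set (ℝ × ℝ) := {x | 0 ≤ x.1 ∧ 0 ≤ x.2}

/-- A subset of `ℕ²` viewed inside `ℝ²`. -/
def toR2 (S : Set (ℕ × ℕ)) : Set (ℝ × ℝ) :=
  (fun pq : ℕ × ℕ => ((pq.1 : ℝ), (pq.2 : ℝ))) '' S

open Set

section ConvexHullAddCone

variable {E : Type*} [AddCommGroup E] [Module ℝ E] {A B K : Set E}

lemma convexHull_add_eq_of_subset_add (hK : Convex ℝ K) (hKK : K + K ⊆ K) (hBA : B ⊆ A)
    (hAB : A ⊆ B + K) : convexHull ℝ (A + K) = convexHull ℝ B + K := by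
  rw [convexHull_add, hK.convexHull_eq]
  refine (add_subset_add_right (convexHull_mono hBA)).antisymm' ?_
  have hA : convexHull ℝ A ⊆ convexHull ℝ B + K :=
    convexHull_min (hAB.trans (add_subset_add_right (subset_convexHull ℝ B)))
      ((convex_convexHull ℝ B).add hK)
  calc convexHull ℝ A + K ⊆ convexHull ℝ B + K + K := add_subset_add_right hA
    _ = convexHull ℝ B + (K + K) := add_assoc _ _ _
    _ ⊆ convexHull ℝ B + K := add_subset_add_left hKK

lemma convexHull_add_add_subset (hK : Convex ℝ K) (hKK : K + K ⊆ K) :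
    convexHull ℝ (A + K) + K ⊆ convexHull ℝ (A + K) := by
  rw [convexHull_add, hK.convexHull_eq, add_assoc]
  exact add_subset_add_left hKK

lemma map_nonneg_of_bddBelow_of_add_subset {F : Type*} [FunLike F E ℝ]
    [LinearMapClass F ℝ E ℝ] (f : F) {C : Set E} (hCK : C + K ⊆ C)
    (hK : ∀ t : ℝ, 0 ≤ t → ∀ k ∈ K, t • k ∈ K) (hC : C.Nonempty) (hf : BddBelow (f '' C))
    {k : E} (hk : k ∈ K) : 0 ≤ f k := by
  obtain ⟨c, hc⟩ := hC
  obtain ⟨u, hu⟩ := hf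
  have hfc : u ≤ f c := hu (mem_image_of_mem f hc)
  by_contra! hneg
  -- far enough along the ray `c + t • k` the functional drops below `u`
  set t := (f c - u + 1) / -f k
  have ht : t * f k = -(f c - u + 1) := by
    have hk0 : f k ≠ 0 := hneg.ne
    simp only [t]
    field_simp
  have hmem : c + t • k ∈ C :=
    hCK (add_mem_add hc (hK t (div_nonneg (by linarith) (by linarith)) k hk))
  have hle := hu (mem_image_of_mem f hmem)
  rw [map_add, map_smul, smul_eq_mul, ht] at hle
  linarith

end ConvexHullAddCone

lemma apply_eq_mul_fst_add_mul_snd {F : Type*} [FunLike F (ℝ × ℝ) ℝ]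
    [LinearMapClass F ℝ (ℝ × ℝ) ℝ] (f : F) (x : ℝ × ℝ) :
    f x = f (1, 0) * x.1 + f (0, 1) * x.2 := by
  conv_lhs => rw [show x = x.1 • ((1 : ℝ), (0 : ℝ)) + x.2 • ((0 : ℝ), (1 : ℝ)) by ext <;> simp]
  rw [map_add, map_smul, map_smul, smul_eq_mul, smul_eq_mul, mul_comm x.1, mul_comm x.2]

lemma quadrant_eq_Ici : quadrant = Ici 0 := by
  ext x
  simp [quadrant, Prod.le_def]

lemma convex_quadrant : Convex ℝ quadrant := quadrant_eq_Ici ▸ convex_Ici 0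

lemma isClosed_quadrant : IsClosed quadrant := quadrant_eq_Ici ▸ isClosed_Ici

lemma quadrant_add_quadrant_subset : quadrant + quadrant ⊆ quadrant := by
  rintro _ ⟨x, hx, y, hy, rfl⟩
  exact ⟨add_nonneg hx.1 hy.1, add_nonneg hx.2 hy.2⟩

lemma zero_mem_quadrant : (0 : ℝ × ℝ) ∈ quadrant := ⟨le_rfl, le_rfl⟩

lemma smul_mem_quadrant {t : ℝ} (ht : 0 ≤ t) {x : ℝ × ℝ} (hx : x ∈ quadrant) :
    t • x ∈ quadrant :=
  ⟨mul_nonneg ht hx.1, mul_nonneg ht hx.2⟩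

lemma toR2_subset_toR2_minimal_add_quadrant (S : Set (ℕ × ℕ)) :
    toR2 S ⊆ toR2 {t | Minimal (· ∈ S) t} + quadrant := by
  rintro _ ⟨s, hs, rfl⟩
  obtain ⟨t, hts, ht⟩ := exists_minimal_le_of_wellFoundedLT (· ∈ S) s hs
  refine ⟨_, ⟨t, ht, rfl⟩, ((s.1 : ℝ) - t.1, (s.2 : ℝ) - t.2), ?_, by simp⟩
  exact ⟨sub_nonneg.2 (by exact_mod_cast hts.1), sub_nonneg.2 (by exact_mod_cast hts.2)⟩

lemma toR2_subset_quadrant (S : Set (ℕ × ℕ)) : toR2 S ⊆ quadrant := by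
  rintro _ ⟨s, -, rfl⟩
  exact ⟨Nat.cast_nonneg _, Nat.cast_nonneg _⟩

noncomputable def tropicalFun (S : Set (ℕ × ℕ)) (w₁ w₂ : ℝ) : ℝ :=
  sInf {r : ℝ | ∃ pq ∈ S, r = w₁ * pq.1 + w₂ * pq.2}

section Tropical

variable {S : Set (ℕ × ℕ)} {w₁ w₂ : ℝ}

lemma tropicalFun_le (hw₁ : 0 ≤ w₁) (hw₂ : 0 ≤ w₂) {s : ℕ × ℕ} (hs : s ∈ S) :
    tropicalFun S w₁ w₂ ≤ w₁ * s.1 + w₂ * s.2 :=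
  csInf_le ⟨0, by rintro _ ⟨pq, -, rfl⟩; positivity⟩ ⟨s, hs, rfl⟩

lemma le_tropicalFun (hS : S.Nonempty) {u : ℝ} (h : ∀ s ∈ S, u ≤ w₁ * s.1 + w₂ * s.2) :
    u ≤ tropicalFun S w₁ w₂ :=
  le_csInf (let ⟨s, hs⟩ := hS; ⟨_, s, hs, rfl⟩) (by rintro _ ⟨s, hs, rfl⟩; exact h s hs)

end Tropical

def newtonPolygon (S : Set (ℕ × ℕ)) : Set (ℝ × ℝ) :=
  convexHull ℝ (toR2 S + quadrant)

section NewtonPolygon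

variable {S : Set (ℕ × ℕ)}

lemma newtonPolygon_eq_convexHull_minimal_add_quadrant (S : Set (ℕ × ℕ)) :
    newtonPolygon S = convexHull ℝ (toR2 {t | Minimal (· ∈ S) t}) + quadrant :=
  convexHull_add_eq_of_subset_add convex_quadrant quadrant_add_quadrant_subset
    (image_mono fun _ ht ↦ ht.1) (toR2_subset_toR2_minimal_add_quadrant S)

lemma isClosed_newtonPolygon (S : Set (ℕ × ℕ)) : IsClosed (newtonPolygon S) := by
  rw [newtonPolygon_eq_convexHull_minimal_add_quadrant]
  -- Dickson's lemma: the minimal elements of `S` form an antichain of `ℕ²`, hence a finite set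
  have hfin : {t | Minimal (· ∈ S) t}.Finite :=
    WellQuasiOrderedLE.finite_of_isAntichain (setOfPred_minimal_antichain _)
  exact isClosed_quadrant.add_left_of_isCompact ((hfin.image _).isCompact_convexHull (𝕜 := ℝ))

lemma newtonPolygon_add_quadrant_subset : newtonPolygon S + quadrant ⊆ newtonPolygon S :=
  convexHull_add_add_subset convex_quadrant quadrant_add_quadrant_subset

lemma newtonPolygon_subset_quadrant : newtonPolygon S ⊆ quadrant :=
  convexHull_min ((add_subset_add_right (toR2_subset_quadrant S)).trans
    quadrant_add_quadrant_subset) convex_quadrant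

lemma tropicalFun_le_of_mem_newtonPolygon {m : ℝ × ℝ} (hm : m ∈ newtonPolygon S) {w₁ w₂ : ℝ}
    (hw₁ : 0 ≤ w₁) (hw₂ : 0 ≤ w₂) : tropicalFun S w₁ w₂ ≤ w₁ * m.1 + w₂ * m.2 := by
  have hlin : IsLinearMap ℝ fun x : ℝ × ℝ ↦ w₁ * x.1 + w₂ * x.2 :=
    ⟨fun x y ↦ by simp only [Prod.fst_add, Prod.snd_add]; ring,
      fun c x ↦ by simp only [Prod.smul_fst, Prod.smul_snd, smul_eq_mul]; ring⟩
  refine convexHull_min ?_ (convex_halfSpace_ge hlin _) hm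
  rintro _ ⟨_, ⟨s, hs, rfl⟩, q, hq, rfl⟩
  have hs_trop := tropicalFun_le hw₁ hw₂ hs
  simp only [mem_ofPred_eq, Prod.fst_add, Prod.snd_add]
  nlinarith [mul_nonneg hw₁ hq.1, mul_nonneg hw₂ hq.2]

lemma mem_newtonPolygon_of_forall_tropicalFun_le (hS : S.Nonempty) {m : ℝ × ℝ}
    (h : ∀ w₁ w₂ : ℝ, 0 ≤ w₁ → 0 ≤ w₂ → tropicalFun S w₁ w₂ ≤ w₁ * m.1 + w₂ * m.2) :
    m ∈ newtonPolygon S := by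
  by_contra hm
  obtain ⟨f, u, hfm, hfN⟩ :=
    geometric_hahn_banach_point_closed (convex_convexHull ℝ _) (isClosed_newtonPolygon S) hm
  have hN : (newtonPolygon S).Nonempty :=
    ((hS.image _).add ⟨0, zero_mem_quadrant⟩).convexHull
  have hbdd : BddBelow (f '' newtonPolygon S) :=
    ⟨u, forall_mem_image.2 fun x hx ↦ (hfN x hx).le⟩
  have hf_nonneg (k : ℝ × ℝ) (hk : k ∈ quadrant) : 0 ≤ f k :=
    map_nonneg_of_bddBelow_of_add_subset f newtonPolygon_add_quadrant_subset
      (fun _ ht _ hk ↦ smul_mem_quadrant ht hk) hN hbdd hk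
  have hu : u ≤ tropicalFun S (f (1, 0)) (f (0, 1)) := by
    refine le_tropicalFun hS fun s hs ↦ ?_
    have hfs := hfN _ (subset_convexHull ℝ _ (add_mem_add ⟨s, hs, rfl⟩ zero_mem_quadrant))
    rw [add_zero, apply_eq_mul_fst_add_mul_snd] at hfs
    exact hfs.le
  have hm_trop := h _ _ (hf_nonneg (1, 0) ⟨zero_le_one, le_rfl⟩)
    (hf_nonneg (0, 1) ⟨le_rfl, zero_le_one⟩)
  rw [apply_eq_mul_fst_add_mul_snd] at hfm
  linarith

end NewtonPolygon

/-- a Newton polygon is reconstructed from its tropical (support) function: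
`m` lies in `convexHull ℝ (S + σ∨)` iff `m` has nonnegative coordinates and for all weights
`w₁, w₂ ≥ 0` the tropical function value `sInf {w₁·p + w₂·q : (p,q) ∈ S}` is at most
`w₁·m₁ + w₂·m₂`. -/
theorem mem_newtonPolygon_iff_tropical (S : Set (ℕ × ℕ)) (hS : S.Nonempty) (m : ℝ × ℝ) :
    m ∈ convexHull ℝ (toR2 S + quadrant) ↔
      0 ≤ m.1 ∧ 0 ≤ m.2 ∧
        ∀ w₁ w₂ : ℝ, 0 ≤ w₁ → 0 ≤ w₂ →
          sInf {r : ℝ | ∃ pq ∈ S, r = w₁ * pq.1 + w₂ * pq.2} ≤ w₁ * m.1 + w₂ * m.2 := by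
  constructor
  · intro hm
    have hm_quadrant : m ∈ quadrant := newtonPolygon_subset_quadrant hm
    exact ⟨hm_quadrant.1, hm_quadrant.2, fun _ _ ↦ tropicalFun_le_of_mem_newtonPolygon hm⟩
  · rintro ⟨-, -, h⟩
    exact mem_newtonPolygon_of_forall_tropicalFun_le hS h
end

section
/- Let η ∈ ℂ⟦u,v⟧ be nonzero, let (a,b) be coprime positive integers, set w := (a,b) and μ := w(η). Then for every c ∈ ℂ with c ≠ 0: order(η_c) > μ if and only if Σ_{(p,q) ∈ supp(η), a·p + b·q = μ} (coefficient of η at (p,q))·c^p = 0. Moreover this finite sum equals c^{p₀}·Σ_j c_j·(c^b)^j, where (p₀,q₀) is the point of the face {(p,q) ∈ supp(η) : a·p+b·q = μ} with minimal first coordinate and c_j is the coefficient of η at (p₀+j·b, q₀−j·a); hence the condition is equivalent to c^b being a root of the univariate face polynomial P_{η,ℒ}(z) := Σ_j c_j z^j. (Part (2) of the paper's Proposition 7.15.) -/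
/-- The coefficient of `η` at the exponent pair `(p, q)`. -/
noncomputable def coeff2 (η : MvPowerSeries (Fin 2) ℂ) (p q : ℕ) : ℂ :=
  MvPowerSeries.coeff (Finsupp.single 0 p + Finsupp.single 1 q) η

/-- The `(a,b)`-weighted order of `η`: the minimum of `a*p + b*q` over the support of `η`. -/
noncomputable def wOrder (a b : ℕ) (η : MvPowerSeries (Fin 2) ℂ) : ℕ :=
  sInf {n : ℕ | ∃ p q : ℕ, coeff2 η p q ≠ 0 ∧ n = a * p + b * q}

/-- The univariate power series `η_c` obtained from `η ∈ ℂ⟦u,v⟧` by the substitution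
`u := c·t^a`, `v := t^b`.  Since `a, b ≥ 1`, the coefficient of `t^N` only involves the
terms of `η` of bidegree `< (N+1, N+1)`, so it may be computed by substituting into the
corresponding truncation of `η`. -/
noncomputable def substBinomial (a b : ℕ) (c : ℂ) (η : MvPowerSeries (Fin 2) ℂ) :
    PowerSeries ℂ :=
  PowerSeries.mk fun N =>
    PowerSeries.coeff N
      (MvPolynomial.aeval
        ![PowerSeries.C c * PowerSeries.X ^ a, PowerSeries.X ^ b]
        (MvPowerSeries.trunc ℂ (Finsupp.single 0 (N + 1) + Finsupp.single 1 (N + 1)) η))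

/-!
Substituting `u = c t^a`, `v = t^b` sends `u^p v^q` to `c^p t^(a p + b q)`, so the
`t^N`-coefficient of `η_c` is the weight-`N` part of `η` evaluated at `(c, 1)`. It vanishes for
`N < μ`, hence `order η_c > μ` iff it vanishes for `N = μ`. As `a` and `b` are coprime, the
lattice points of the face `a p + b q = μ` with `p ≥ p₀` are exactly the `(p₀ + j b, q₀ - j a)`,
which turns the face sum into `c^p₀ · P(c^b)`.
-/

open Finset

lemma PowerSeries.natCast_lt_order_iff {R : Type*} [Semiring R] {φ : PowerSeries R} {n : ℕ}
    (h : ∀ i < n, coeff i φ = 0) : (n : ℕ∞) < φ.order ↔ coeff n φ = 0 := by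
  refine ⟨coeff_of_lt_order n, fun hn => ?_⟩
  have : ((n + 1 : ℕ) : ℕ∞) ≤ φ.order :=
    nat_le_order φ (n + 1) fun i hi => (Nat.lt_succ_iff_lt_or_eq.mp hi).elim (h i) (· ▸ hn)
  exact lt_of_lt_of_le (by exact_mod_cast n.lt_succ_self) this

lemma Finsupp.eq_single_zero_add_single_one (d : Fin 2 →₀ ℕ) :
    d = Finsupp.single 0 (d 0) + Finsupp.single 1 (d 1) := by
  ext i
  fin_cases i <;> simp

lemma Finsupp.single_add_single_lt {p q m n : ℕ} (hp : p < m) (hq : q < n) :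
    Finsupp.single (0 : Fin 2) p + Finsupp.single 1 q <
      Finsupp.single 0 m + Finsupp.single 1 n := by
  refine Finsupp.lt_def.mpr ⟨Finsupp.le_def.mpr (Fin.forall_fin_two.mpr ⟨?_, ?_⟩), 0, ?_⟩ <;>
    simp <;> omega

lemma Nat.exists_eq_add_mul_of_mul_add_mul_eq {a b p q p₀ q₀ : ℕ} (hb : 0 < b)
    (hab : a.Coprime b) (h : a * p + b * q = a * p₀ + b * q₀) (hp : p₀ ≤ p) :
    ∃ j, p = p₀ + j * b ∧ q + j * a = q₀ := by
  obtain ⟨d, rfl⟩ := Nat.exists_eq_add_of_le hp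
  have had : a * d + b * q = b * q₀ := by
    rw [mul_add, add_assoc] at h
    exact Nat.add_left_cancel h
  obtain ⟨j, rfl⟩ : b ∣ d :=
    hab.symm.dvd_of_dvd_mul_left
      ((Nat.dvd_add_left (dvd_mul_right b q)).mp (had ▸ dvd_mul_right b q₀))
  refine ⟨j, by ring, Nat.eq_of_mul_eq_mul_left hb ?_⟩
  linarith [had]

lemma PowerSeries.coeff_aeval_C_mul_X_pow_X_pow (a b : ℕ) (c : ℂ) (N : ℕ)
    (P : MvPolynomial (Fin 2) ℂ) :
    coeff N (MvPolynomial.aeval ![C c * X ^ a, X ^ b] P) =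
      ∑ d ∈ P.support, if a * d 0 + b * d 1 = N then P.coeff d * c ^ d 0 else 0 := by
  have hmonomial (d : Fin 2 →₀ ℕ) :
      (C c * X ^ a) ^ d 0 * (X ^ b) ^ d 1 = C (c ^ d 0) * X ^ (a * d 0 + b * d 1) := by
    rw [mul_pow, ← pow_mul, ← pow_mul, ← map_pow, mul_assoc, ← pow_add, mul_comm a, mul_comm b]
  rw [MvPolynomial.aeval_def, MvPolynomial.eval₂_eq', map_sum]
  refine sum_congr rfl fun d _ => ?_
  simp only [Fin.prod_univ_two, Matrix.cons_val_zero, Matrix.cons_val_one]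
  rw [hmonomial, algebraMap_eq, ← mul_assoc, ← map_mul, coeff_C_mul_X_pow]
  simp only [eq_comm]

lemma coeff_trunc_eq_coeff2 (η : MvPowerSeries (Fin 2) ℂ) {N p q : ℕ} (hp : p ≤ N)
    (hq : q ≤ N) :
    (MvPowerSeries.trunc ℂ (Finsupp.single 0 (N + 1) + Finsupp.single 1 (N + 1)) η).coeff
      (Finsupp.single 0 p + Finsupp.single 1 q) = coeff2 η p q := by
  rw [MvPowerSeries.coeff_trunc, if_pos (Finsupp.single_add_single_lt (by omega) (by omega)),
    coeff2]

noncomputable def weightedComponentEval (a b : ℕ) (c : ℂ) (η : MvPowerSeries (Fin 2) ℂ)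
    (N : ℕ) : ℂ :=
  ∑ p ∈ range (N + 1), ∑ q ∈ range (N + 1),
    if a * p + b * q = N then coeff2 η p q * c ^ p else 0

lemma coeff_substBinomial {a b : ℕ} (ha : 0 < a) (hb : 0 < b) (c : ℂ)
    (η : MvPowerSeries (Fin 2) ℂ) (N : ℕ) :
    PowerSeries.coeff N (substBinomial a b c η) = weightedComponentEval a b c η N := by
  have bound {p q : ℕ} (h : a * p + b * q = N) : p ≤ N ∧ q ≤ N := by
    constructor <;> nlinarith
  rw [substBinomial, PowerSeries.coeff_mk, PowerSeries.coeff_aeval_C_mul_X_pow_X_pow,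
    weightedComponentEval, ← sum_product']
  refine sum_bij_ne_zero (fun d _ _ => (d 0, d 1)) ?_ ?_ ?_ ?_
  · intro d _ hd
    have := bound (of_not_not fun h => hd (if_neg h))
    simpa only [mem_product, mem_range, Nat.lt_succ_iff] using this
  · intro d _ _ d' _ _ h
    simp only [Prod.mk.injEq] at h
    rw [d.eq_single_zero_add_single_one, d'.eq_single_zero_add_single_one, h.1, h.2]
  · rintro ⟨p, q⟩ _ hne
    have hN : a * p + b * q = N := of_not_not fun h => hne (if_neg h)
    have hcoeff := coeff_trunc_eq_coeff2 η (bound hN).1 (bound hN).2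
    refine ⟨Finsupp.single 0 p + Finsupp.single 1 q, ?_, ?_, by simp⟩
    · rw [if_pos hN] at hne
      rw [MvPolynomial.mem_support_iff, hcoeff]
      exact left_ne_zero_of_mul hne
    · have h0 : (Finsupp.single 0 p + Finsupp.single 1 q : Fin 2 →₀ ℕ) 0 = p := by simp
      have h1 : (Finsupp.single 0 p + Finsupp.single 1 q : Fin 2 →₀ ℕ) 1 = q := by simp
      rwa [hcoeff, h0, h1]
  · intro d _ hd
    have hN : a * d 0 + b * d 1 = N := of_not_not fun h => hd (if_neg h)
    dsimp only
    rw [if_pos hN, if_pos hN, ← coeff_trunc_eq_coeff2 η (bound hN).1 (bound hN).2,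
      ← d.eq_single_zero_add_single_one]

section WeightedOrder

variable {a b : ℕ} {η : MvPowerSeries (Fin 2) ℂ}

lemma wOrder_le {p q : ℕ} (h : coeff2 η p q ≠ 0) : wOrder a b η ≤ a * p + b * q :=
  Nat.sInf_le ⟨p, q, h, rfl⟩

lemma coeff2_eq_zero_of_lt_wOrder {p q : ℕ} (h : a * p + b * q < wOrder a b η) :
    coeff2 η p q = 0 :=
  of_not_not fun hne => (wOrder_le hne).not_gt h

lemma weightedComponentEval_eq_zero_of_lt_wOrder (c : ℂ) {N : ℕ} (h : N < wOrder a b η) :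
    weightedComponentEval a b c η N = 0 := by
  refine sum_eq_zero fun p _ => sum_eq_zero fun q _ => ?_
  split_ifs with hN
  · rw [coeff2_eq_zero_of_lt_wOrder (hN ▸ h), zero_mul]
  · rfl

lemma wOrder_lt_order_substBinomial_iff (ha : 0 < a) (hb : 0 < b) (c : ℂ) :
    (wOrder a b η : ℕ∞) < (substBinomial a b c η).order ↔
      weightedComponentEval a b c η (wOrder a b η) = 0 := by
  rw [PowerSeries.natCast_lt_order_iff, coeff_substBinomial ha hb]
  intro i hi
  rw [coeff_substBinomial ha hb, weightedComponentEval_eq_zero_of_lt_wOrder c hi]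

end WeightedOrder

lemma weightedComponentEval_eq_of_face {a b : ℕ} (ha : 0 < a) (hb : 0 < b) (hab : a.Coprime b)
    {η : MvPowerSeries (Fin 2) ℂ} {N p₀ q₀ : ℕ} (hface : a * p₀ + b * q₀ = N)
    (hmin : ∀ p q : ℕ, coeff2 η p q ≠ 0 → a * p + b * q = N → p₀ ≤ p) (c : ℂ) :
    weightedComponentEval a b c η N =
      c ^ p₀ *
        ∑ j ∈ range (q₀ / a + 1), coeff2 η (p₀ + j * b) (q₀ - j * a) * (c ^ b) ^ j := by
  have hja {j : ℕ} (hj : j ∈ range (q₀ / a + 1)) : j * a ≤ q₀ :=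
    (Nat.le_div_iff_mul_le ha).mp (Nat.lt_succ_iff.mp (mem_range.mp hj))
  have hon_face {j : ℕ} (hj : j * a ≤ q₀) : a * (p₀ + j * b) + b * (q₀ - j * a) = N := by
    rw [← hface]
    zify [hj]
    ring
  have hterm {j : ℕ} (hj : j * a ≤ q₀) :
      c ^ p₀ * (coeff2 η (p₀ + j * b) (q₀ - j * a) * (c ^ b) ^ j) =
        if a * (p₀ + j * b) + b * (q₀ - j * a) = N then
          coeff2 η (p₀ + j * b) (q₀ - j * a) * c ^ (p₀ + j * b) else 0 := by
    rw [if_pos (hon_face hj), pow_add, ← pow_mul, mul_comm b]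
    ring
  rw [weightedComponentEval, ← sum_product', mul_sum]
  symm
  refine sum_bij_ne_zero (fun j _ _ => (p₀ + j * b, q₀ - j * a)) ?_ ?_ ?_ ?_
  · intro j hj _
    have := hon_face (hja hj)
    have hp := Nat.le_mul_of_pos_left (p₀ + j * b) ha
    have hq := Nat.le_mul_of_pos_left (q₀ - j * a) hb
    simp only [mem_product, mem_range, Nat.lt_succ_iff]
    omega
  · intro j _ _ j' _ _ h
    exact Nat.eq_of_mul_eq_mul_right hb (by simpa using congrArg Prod.fst h)
  · rintro ⟨p, q⟩ _ hne
    have hN : a * p + b * q = N := of_not_not fun h => hne (if_neg h)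
    have hcoeff : coeff2 η p q ≠ 0 := left_ne_zero_of_mul (by rwa [if_pos hN] at hne)
    obtain ⟨j, rfl, rfl⟩ :=
      Nat.exists_eq_add_mul_of_mul_add_mul_eq hb hab (hN.trans hface.symm) (hmin p q hcoeff hN)
    have hj : j ∈ range ((q + j * a) / a + 1) :=
      mem_range.mpr (Nat.lt_succ_iff.mpr ((Nat.le_div_iff_mul_le ha).mpr (Nat.le_add_left _ _)))
    refine ⟨j, hj, ?_, by simp⟩
    rwa [hterm (hja hj), Nat.add_sub_cancel]
  · intro j hj _
    exact hterm (hja hj)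

theorem order_substBinomial_gt_iff_general (η : MvPowerSeries (Fin 2) ℂ)
    (a b : ℕ) (ha : 0 < a) (hb : 0 < b) (hab : Nat.Coprime a b) (p₀ q₀ : ℕ)
    (hface : a * p₀ + b * q₀ = wOrder a b η)
    (hmin : ∀ p q : ℕ, coeff2 η p q ≠ 0 → a * p + b * q = wOrder a b η → p₀ ≤ p)
    (c : ℂ) (hc : c ≠ 0) :
    ((wOrder a b η : ℕ∞) < (substBinomial a b c η).order ↔
      (∑ p ∈ Finset.range (wOrder a b η + 1), ∑ q ∈ Finset.range (wOrder a b η + 1),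
        if a * p + b * q = wOrder a b η then coeff2 η p q * c ^ p else 0) = 0) ∧
    (∑ p ∈ Finset.range (wOrder a b η + 1), ∑ q ∈ Finset.range (wOrder a b η + 1),
        if a * p + b * q = wOrder a b η then coeff2 η p q * c ^ p else 0) =
      c ^ p₀ * ∑ j ∈ Finset.range (q₀ / a + 1),
        coeff2 η (p₀ + j * b) (q₀ - j * a) * (c ^ b) ^ j ∧
    ((wOrder a b η : ℕ∞) < (substBinomial a b c η).order ↔
      Polynomial.IsRoot
        (∑ j ∈ Finset.range (q₀ / a + 1),
          Polynomial.C (coeff2 η (p₀ + j * b) (q₀ - j * a)) * Polynomial.X ^ j)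
        (c ^ b)) := by
  have horder := wOrder_lt_order_substBinomial_iff (η := η) ha hb c
  have hface_sum := weightedComponentEval_eq_of_face ha hb hab hface hmin c
  refine ⟨horder, hface_sum, ?_⟩
  rw [horder, hface_sum, mul_eq_zero_iff_left (pow_ne_zero _ hc), Polynomial.IsRoot.def,
    Polynomial.eval_finsetSum]
  simp

/-- for `η ≠ 0`, coprime positive `a, b`, `μ = w(η)`, and every `c ≠ 0`:
`order(η_c) > μ` iff the face sum `Σ_{a·p+b·q = μ} c_{p,q}·c^p` vanishes; moreover this sum
equals `c^{p₀} · Σ_j c_j·(c^b)^j` where `(p₀,q₀)` is the face point of minimal first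
coordinate and `c_j` is the coefficient of `η` at `(p₀+j·b, q₀−j·a)`; hence the condition
is equivalent to `c^b` being a root of the face polynomial `P(z) = Σ_j c_j z^j`. -/
theorem order_substBinomial_gt_iff (η : MvPowerSeries (Fin 2) ℂ) (hη : η ≠ 0)
    (a b : ℕ) (ha : 0 < a) (hb : 0 < b) (hab : Nat.Coprime a b) (p₀ q₀ : ℕ)
    (h₀ : coeff2 η p₀ q₀ ≠ 0) (hface : a * p₀ + b * q₀ = wOrder a b η)
    (hmin : ∀ p q : ℕ, coeff2 η p q ≠ 0 → a * p + b * q = wOrder a b η → p₀ ≤ p)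
    (c : ℂ) (hc : c ≠ 0) :
    ((wOrder a b η : ℕ∞) < (substBinomial a b c η).order ↔
      (∑ p ∈ Finset.range (wOrder a b η + 1), ∑ q ∈ Finset.range (wOrder a b η + 1),
        if a * p + b * q = wOrder a b η then coeff2 η p q * c ^ p else 0) = 0) ∧
    (∑ p ∈ Finset.range (wOrder a b η + 1), ∑ q ∈ Finset.range (wOrder a b η + 1),
        if a * p + b * q = wOrder a b η then coeff2 η p q * c ^ p else 0) =
      c ^ p₀ * ∑ j ∈ Finset.range (q₀ / a + 1),
        coeff2 η (p₀ + j * b) (q₀ - j * a) * (c ^ b) ^ j ∧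
    ((wOrder a b η : ℕ∞) < (substBinomial a b c η).order ↔
      Polynomial.IsRoot
        (∑ j ∈ Finset.range (q₀ / a + 1),
          Polynomial.C (coeff2 η (p₀ + j * b) (q₀ - j * a)) * Polynomial.X ^ j)
        (c ^ b)) :=
  order_substBinomial_gt_iff_general η a b ha hb hab p₀ q₀ hface hmin c hc
end
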